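/- Suppose u^∞ : ℤ² → ℝᵐ satisfies, for all sufficiently large |ℓ|, the representation u^∞(ℓ) = ∑_{k∈ℤ²} K(ℓ-k)·h(k) where the kernel K satisfies |K(j)| ≤ C(1+|j|)^{-2} and the source h satisfies |h(k)| ≤ C(1+|k|)^{-2} + C|u^∞-data(k)| with the data term bounded by C(1+|k|)^{-2}. Then |u^∞(ℓ)| ≤ C'(1+|ℓ|)^{-2} log(2+|ℓ|). -/

import Mathlib

/-!
Write `w(x) = (1 + x)⁻²`. The terms of the representation are bounded by a multiple of
`w(|ℓ - k|) w(|k|)`, so everything reduces to the lattice convolution bound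
`∑ₖ w(|ℓ - k|) w(|k|) ≲ w(|ℓ|) log(2 + |ℓ|)`.

For `R = |ℓ|` the larger of `|k|`, `|ℓ - k|` is at least `R / 2`, so the product is at most
`4 (1 + R)⁻² w(b)` and also at most `w(b)²`, where `b` is the smaller of the two. Hence it is
bounded by `4 (1 + R)⁻²` times `min (w b) ((1 + R)² w(b)²)`, evaluated at `k` or at `ℓ - k`.
Counting lattice points shell by shell (the sup-norm sphere of radius `n` has `8n` points),
the first branch summed over `|j| ≤ R` is a harmonic sum `≲ log(2 + R)`, while the second
summed over `|j| > R` is `(1 + R)²` times a tail `∑_{|j| > R} (1 + |j|)⁻⁴ ≲ (1 + R)⁻²`.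
-/

/-- Euclidean norm of a point in ℤ². -/
noncomputable def nrm (ℓ : ℤ × ℤ) : ℝ := Real.sqrt ((ℓ.1 : ℝ) ^ 2 + (ℓ.2 : ℝ) ^ 2)

open Finset

def supNorm (j : ℤ × ℤ) : ℕ := max j.1.natAbs j.2.natAbs

lemma nrm_nonneg (j : ℤ × ℤ) : 0 ≤ nrm j := Real.sqrt_nonneg _

lemma nrm_eq_norm_complex (j : ℤ × ℤ) : nrm j = ‖(⟨j.1, j.2⟩ : ℂ)‖ := by
  rw [Complex.norm_def, Complex.normSq_mk, nrm]; ring_nf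

lemma nrm_le_add_nrm_sub (ℓ k : ℤ × ℤ) : nrm ℓ ≤ nrm k + nrm (ℓ - k) := by
  have h : (⟨ℓ.1, ℓ.2⟩ : ℂ) = ⟨k.1, k.2⟩ + ⟨((ℓ - k).1 : ℝ), (ℓ - k).2⟩ := by
    apply Complex.ext <;> simp
  simpa only [nrm_eq_norm_complex, h] using norm_add_le _ _

lemma nrm_eq_sqrt_natAbs (j : ℤ × ℤ) :
    nrm j = Real.sqrt ((j.1.natAbs : ℝ) ^ 2 + (j.2.natAbs : ℝ) ^ 2) := by
  simp only [nrm, Nat.cast_natAbs, Int.cast_abs, sq_abs]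

lemma supNorm_le_nrm (j : ℤ × ℤ) : (supNorm j : ℝ) ≤ nrm j := by
  rw [nrm_eq_sqrt_natAbs, supNorm, Nat.cast_max]
  apply max_le <;> apply Real.le_sqrt_of_sq_le <;> nlinarith

lemma nrm_le_two_mul_supNorm (j : ℤ × ℤ) : nrm j ≤ 2 * supNorm j := by
  rw [nrm_eq_sqrt_natAbs, supNorm, Nat.cast_max]
  apply Real.sqrt_le_iff.2 ⟨by positivity, ?_⟩
  have h1 := le_max_left (j.1.natAbs : ℝ) j.2.natAbs
  have h2 := le_max_right (j.1.natAbs : ℝ) j.2.natAbs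
  nlinarith [(j.1.natAbs).cast_nonneg (α := ℝ), (j.2.natAbs).cast_nonneg (α := ℝ)]

lemma inv_one_add_nrm_pow_le (p : ℕ) (j : ℤ × ℤ) :
    ((1 + nrm j) ^ p)⁻¹ ≤ ((1 + (supNorm j : ℝ)) ^ p)⁻¹ := by
  have := supNorm_le_nrm j
  gcongr

lemma card_box_le (n : ℕ) : #(box n : Finset (ℤ × ℤ)) ≤ 8 * n + 1 := by
  rcases eq_or_ne n 0 with rfl | hn
  · simp
  · rw [Int.card_box hn]; omega

lemma sum_le_sum_supNorm_shells {f : ℤ × ℤ → ℝ} {φ : ℕ → ℝ} (hφ : ∀ n, 0 ≤ φ n)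
    (hf : ∀ j, f j ≤ φ (supNorm j)) {F : Finset (ℤ × ℤ)} {S : Finset ℕ}
    (hFS : ∀ j ∈ F, supNorm j ∈ S) :
    ∑ j ∈ F, f j ≤ ∑ n ∈ S, (8 * n + 1) * φ n := by
  rw [← sum_fiberwise_of_maps_to hFS]
  refine sum_le_sum fun n _ => ?_
  have hbox : {j ∈ F | supNorm j = n} ⊆ box n := fun j hj => Int.mem_box.2 (mem_filter.1 hj).2
  calc ∑ j ∈ F with supNorm j = n, f j
      ≤ #{j ∈ F | supNorm j = n} • φ n :=
        sum_le_card_nsmul _ _ _ fun j hj => (mem_filter.1 hj).2 ▸ hf j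
    _ ≤ #(box n : Finset (ℤ × ℤ)) • φ n := nsmul_le_nsmul_left (hφ n) (card_le_card hbox)
    _ ≤ (8 * n + 1) * φ n := by
        rw [nsmul_eq_mul]
        exact mul_le_mul_of_nonneg_right (by exact_mod_cast card_box_le n) (hφ n)

lemma sum_inv_one_add_nrm_sq_le {R : ℝ} (hR : 0 ≤ R) {F : Finset (ℤ × ℤ)}
    (hF : ∀ j ∈ F, nrm j ≤ R) :
    ∑ j ∈ F, ((1 + nrm j) ^ 2)⁻¹ ≤ 8 * (1 + Real.log (2 + R)) := by
  set N := ⌊R⌋₊ + 1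
  have hN : (N : ℝ) ≤ 2 + R := by
    simp only [N, Nat.cast_add, Nat.cast_one]; linarith [Nat.floor_le hR]
  calc ∑ j ∈ F, ((1 + nrm j) ^ 2)⁻¹
      ≤ ∑ n ∈ range N, (8 * n + 1) * ((1 + n : ℝ) ^ 2)⁻¹ :=
        sum_le_sum_supNorm_shells (fun n => by positivity) (inv_one_add_nrm_pow_le 2)
          fun j hj => mem_range.2 <| Nat.lt_succ_of_le <|
            Nat.le_floor <| (supNorm_le_nrm j).trans (hF j hj)
    _ ≤ ∑ n ∈ range N, 8 * ((n + 1 : ℕ) : ℝ)⁻¹ := sum_le_sum fun n _ => by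
        push_cast
        rw [← div_eq_mul_inv, ← div_eq_mul_inv, div_le_div_iff₀ (by positivity) (by positivity)]
        nlinarith
    _ = 8 * harmonic N := by simp [harmonic, mul_sum]
    _ ≤ 8 * (1 + Real.log N) := by gcongr; exact harmonic_le_one_add_log N
    _ ≤ 8 * (1 + Real.log (2 + R)) := by gcongr

lemma eight_mul_add_one_mul_inv_pow_four_le {M n : ℕ} (hn : M < n) :
    (8 * n + 1) * ((1 + n : ℝ) ^ 4)⁻¹ ≤ 8 * (M + 1 : ℝ)⁻¹ * ((n : ℝ) ^ 2)⁻¹ := by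
  have hMn : (M + 1 : ℝ) ≤ n := by exact_mod_cast hn
  have hn0 : (0 : ℝ) < n := by linarith [M.cast_nonneg (α := ℝ)]
  rw [mul_assoc, ← mul_inv, ← div_eq_mul_inv, ← div_eq_mul_inv,
    div_le_div_iff₀ (by positivity) (by positivity)]
  nlinarith [mul_le_mul_of_nonneg_right hMn (sq_nonneg (n : ℝ)), pow_pos hn0 3]

lemma sum_inv_one_add_nrm_pow_four_le {R : ℝ} (hR : 0 ≤ R) {F : Finset (ℤ × ℤ)}
    (hF : ∀ j ∈ F, R < nrm j) :
    ∑ j ∈ F, ((1 + nrm j) ^ 4)⁻¹ ≤ 144 * ((1 + R) ^ 2)⁻¹ := by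
  set M := ⌊R / 2⌋₊
  have hM : 1 + R ≤ 3 * (M + 1 : ℝ) := by linarith [Nat.lt_floor_add_one (R / 2)]
  have hFS : ∀ j ∈ F, supNorm j ∈ Ioo M (F.sup supNorm + 1) := fun j hj => by
    refine mem_Ioo.2 ⟨?_, Nat.lt_succ_of_le (le_sup hj)⟩
    have : (M : ℝ) < supNorm j := by
      linarith [Nat.floor_le (div_nonneg hR zero_le_two), nrm_le_two_mul_supNorm j, hF j hj]
    exact_mod_cast this
  calc ∑ j ∈ F, ((1 + nrm j) ^ 4)⁻¹
      ≤ ∑ n ∈ Ioo M (F.sup supNorm + 1), (8 * n + 1) * ((1 + n : ℝ) ^ 4)⁻¹ :=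
        sum_le_sum_supNorm_shells (fun n => by positivity) (inv_one_add_nrm_pow_le 4) hFS
    _ ≤ ∑ n ∈ Ioo M (F.sup supNorm + 1), 8 * (M + 1 : ℝ)⁻¹ * ((n : ℝ) ^ 2)⁻¹ :=
        sum_le_sum fun n hn => eight_mul_add_one_mul_inv_pow_four_le (mem_Ioo.1 hn).1
    _ ≤ 8 * (M + 1 : ℝ)⁻¹ * (2 / (M + 1)) := by
        rw [← mul_sum]; gcongr; exact sum_Ioo_inv_sq_le _ _
    _ = 16 * ((M + 1 : ℝ) ^ 2)⁻¹ := by field_simp; ring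
    _ ≤ 144 * ((1 + R) ^ 2)⁻¹ := by
        rw [← div_eq_mul_inv, ← div_eq_mul_inv, div_le_div_iff₀ (by positivity) (by positivity)]
        nlinarith
lemma inv_sq_mul_inv_sq_le {a b R : ℝ} (hb : 0 ≤ b) (hR : 0 ≤ R) (hab : R ≤ a + b)
    (hba : b ≤ a) :
    ((1 + a) ^ 2)⁻¹ * ((1 + b) ^ 2)⁻¹ ≤
      4 * ((1 + R) ^ 2)⁻¹ * min ((1 + b) ^ 2)⁻¹ ((1 + R) ^ 2 * ((1 + b) ^ 4)⁻¹) := by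
  have hwa : ((1 + a) ^ 2)⁻¹ ≤ 4 * ((1 + R) ^ 2)⁻¹ :=
    calc ((1 + a) ^ 2)⁻¹ = 4 * ((2 * (1 + a)) ^ 2)⁻¹ := by field_simp; ring
      _ ≤ 4 * ((1 + R) ^ 2)⁻¹ := by gcongr; linarith
  have hwab : ((1 + a) ^ 2)⁻¹ ≤ ((1 + b) ^ 2)⁻¹ := by gcongr
  rw [mul_min_of_nonneg _ _ (by positivity)]
  refine le_min (by gcongr) ?_
  calc ((1 + a) ^ 2)⁻¹ * ((1 + b) ^ 2)⁻¹ ≤ ((1 + b) ^ 2)⁻¹ * ((1 + b) ^ 2)⁻¹ := by gcongr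
    _ = ((1 + b) ^ 4)⁻¹ := by rw [← mul_inv]; ring
    _ ≤ 4 * ((1 + b) ^ 4)⁻¹ := le_mul_of_one_le_left (by positivity) (by norm_num)
    _ = 4 * ((1 + R) ^ 2)⁻¹ * ((1 + R) ^ 2 * ((1 + b) ^ 4)⁻¹) := by field_simp

noncomputable def splitWeight (R : ℝ) (j : ℤ × ℤ) : ℝ :=
  min ((1 + nrm j) ^ 2)⁻¹ ((1 + R) ^ 2 * ((1 + nrm j) ^ 4)⁻¹)

lemma splitWeight_nonneg {R : ℝ} (j : ℤ × ℤ) : 0 ≤ splitWeight R j := by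
  unfold splitWeight; positivity

lemma sum_splitWeight_le {R : ℝ} (hR : 0 ≤ R) (F : Finset (ℤ × ℤ)) :
    ∑ j ∈ F, splitWeight R j ≤ 312 * Real.log (2 + R) := by
  have hlog : 1 / 2 ≤ Real.log (2 + R) := by
    linarith [Real.log_two_gt_d9, Real.log_le_log two_pos (by linarith : 2 ≤ 2 + R)]
  rw [← sum_filter_add_sum_filter_not F (fun j => nrm j ≤ R)]
  have hin : ∑ j ∈ F with nrm j ≤ R, splitWeight R j ≤ 8 * (1 + Real.log (2 + R)) :=
    (sum_le_sum fun j _ => min_le_left _ _).trans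
      (sum_inv_one_add_nrm_sq_le hR fun j hj => (mem_filter.1 hj).2)
  have hout : ∑ j ∈ F with ¬nrm j ≤ R, splitWeight R j ≤ 144 :=
    calc ∑ j ∈ F with ¬nrm j ≤ R, splitWeight R j
        ≤ (1 + R) ^ 2 * ∑ j ∈ F with ¬nrm j ≤ R, ((1 + nrm j) ^ 4)⁻¹ := by
          rw [mul_sum]; exact sum_le_sum fun j _ => min_le_right _ _
      _ ≤ (1 + R) ^ 2 * (144 * ((1 + R) ^ 2)⁻¹) := by
          gcongr
          exact sum_inv_one_add_nrm_pow_four_le hR fun j hj => not_le.1 (mem_filter.1 hj).2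
      _ = 144 := by field_simp
  linarith

lemma summable_splitWeight {R : ℝ} (hR : 0 ≤ R) : Summable (splitWeight R) :=
  summable_of_sum_le splitWeight_nonneg (sum_splitWeight_le hR)

lemma tsum_splitWeight_le {R : ℝ} (hR : 0 ≤ R) :
    ∑' j, splitWeight R j ≤ 312 * Real.log (2 + R) :=
  Real.tsum_le_of_sum_le splitWeight_nonneg (sum_splitWeight_le hR)

lemma inv_sq_mul_inv_sq_le_splitWeight (ℓ k : ℤ × ℤ) :
    ((1 + nrm (ℓ - k)) ^ 2)⁻¹ * ((1 + nrm k) ^ 2)⁻¹ ≤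
      4 * ((1 + nrm ℓ) ^ 2)⁻¹ * (splitWeight (nrm ℓ) k + splitWeight (nrm ℓ) (ℓ - k)) := by
  have htri := nrm_le_add_nrm_sub ℓ k
  have key {a b : ℤ × ℤ} (hab : nrm ℓ ≤ nrm a + nrm b) (hba : nrm b ≤ nrm a) :
      ((1 + nrm a) ^ 2)⁻¹ * ((1 + nrm b) ^ 2)⁻¹ ≤ 4 * ((1 + nrm ℓ) ^ 2)⁻¹ * splitWeight (nrm ℓ) b :=
    inv_sq_mul_inv_sq_le (nrm_nonneg b) (nrm_nonneg ℓ) hab hba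
  rcases le_total (nrm (ℓ - k)) (nrm k) with h | h
  · rw [mul_comm]
    exact (key htri h).trans (by gcongr; exact le_add_of_nonneg_left (splitWeight_nonneg k))
  · exact (key (by linarith) h).trans
      (by gcongr; exact le_add_of_nonneg_right (splitWeight_nonneg (ℓ - k)))

lemma summable_inv_sq_conv (ℓ : ℤ × ℤ) :
    Summable fun k => ((1 + nrm (ℓ - k)) ^ 2)⁻¹ * ((1 + nrm k) ^ 2)⁻¹ :=
  .of_nonneg_of_le (fun k => by positivity) (inv_sq_mul_inv_sq_le_splitWeight ℓ) <|
    ((summable_splitWeight (nrm_nonneg ℓ)).add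
      ((Equiv.subLeft ℓ).summable_iff.2 (summable_splitWeight (nrm_nonneg ℓ)))).mul_left _

lemma tsum_inv_sq_conv_le (ℓ : ℤ × ℤ) :
    ∑' k, ((1 + nrm (ℓ - k)) ^ 2)⁻¹ * ((1 + nrm k) ^ 2)⁻¹ ≤
      2496 * ((1 + nrm ℓ) ^ 2)⁻¹ * Real.log (2 + nrm ℓ) := by
  set G := splitWeight (nrm ℓ)
  have hG := summable_splitWeight (nrm_nonneg ℓ)
  have hGℓ : Summable fun k => G (ℓ - k) := (Equiv.subLeft ℓ).summable_iff.2 hG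
  have hGℓ_tsum : ∑' k, G (ℓ - k) = ∑' j, G j := (Equiv.subLeft ℓ).tsum_eq G
  calc ∑' k, ((1 + nrm (ℓ - k)) ^ 2)⁻¹ * ((1 + nrm k) ^ 2)⁻¹
      ≤ ∑' k, 4 * ((1 + nrm ℓ) ^ 2)⁻¹ * (G k + G (ℓ - k)) :=
        (summable_inv_sq_conv ℓ).tsum_le_tsum (inv_sq_mul_inv_sq_le_splitWeight ℓ)
          ((hG.add hGℓ).mul_left _)
    _ = 4 * ((1 + nrm ℓ) ^ 2)⁻¹ * (2 * ∑' j, G j) := by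
        rw [tsum_mul_left, hG.tsum_add hGℓ, hGℓ_tsum, two_mul]
    _ ≤ 4 * ((1 + nrm ℓ) ^ 2)⁻¹ * (2 * (312 * Real.log (2 + nrm ℓ))) := by
        gcongr; exact tsum_splitWeight_le (nrm_nonneg ℓ)
    _ = 2496 * ((1 + nrm ℓ) ^ 2)⁻¹ * Real.log (2 + nrm ℓ) := by ring

/-- Optimal decay from the convolution representation: if for all sufficiently
large |ℓ| one has u∞(ℓ) = ∑_k K(ℓ-k)·h(k) with kernel |K(j)| ≤ C(1+|j|)⁻² and
source |h(k)| ≤ C(1+|k|)⁻² + C|data(k)|, where the data term is itself bounded by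
C(1+|k|)⁻², then |u∞(ℓ)| ≤ C'(1+|ℓ|)⁻² log(2+|ℓ|) for all such ℓ. -/
theorem convolution_optimal_decay (m : ℕ) (C r₀ : ℝ) (hC : 0 < C)
    (uinf : ℤ × ℤ → EuclideanSpace ℝ (Fin m))
    (K : ℤ × ℤ → ℝ) (h dat : ℤ × ℤ → EuclideanSpace ℝ (Fin m))
    (hrep : ∀ ℓ : ℤ × ℤ, r₀ ≤ nrm ℓ → HasSum (fun k : ℤ × ℤ => K (ℓ - k) • h k) (uinf ℓ))
    (hK : ∀ j : ℤ × ℤ, |K j| ≤ C * ((1 + nrm j) ^ 2)⁻¹)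
    (hh : ∀ k : ℤ × ℤ, ‖h k‖ ≤ C * ((1 + nrm k) ^ 2)⁻¹ + C * ‖dat k‖)
    (hdat : ∀ k : ℤ × ℤ, ‖dat k‖ ≤ C * ((1 + nrm k) ^ 2)⁻¹) :
    ∃ C' : ℝ, 0 < C' ∧ ∀ ℓ : ℤ × ℤ, r₀ ≤ nrm ℓ →
      ‖uinf ℓ‖ ≤ C' * ((1 + nrm ℓ) ^ 2)⁻¹ * Real.log (2 + nrm ℓ) := by
  have hsource (k : ℤ × ℤ) : ‖h k‖ ≤ (C + C * C) * ((1 + nrm k) ^ 2)⁻¹ := by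
    have := mul_le_mul_of_nonneg_left (hdat k) hC.le
    linarith [hh k]
  refine ⟨C * (C + C * C) * 2496, by positivity, fun ℓ hℓ => ?_⟩
  have hterm (k : ℤ × ℤ) : ‖K (ℓ - k) • h k‖ ≤
      C * (C + C * C) * (((1 + nrm (ℓ - k)) ^ 2)⁻¹ * ((1 + nrm k) ^ 2)⁻¹) := by
    rw [norm_smul, Real.norm_eq_abs, mul_mul_mul_comm]
    exact mul_le_mul (hK _) (hsource k) (norm_nonneg _) (by positivity)
  calc ‖uinf ℓ‖
      ≤ C * (C + C * C) * ∑' k, ((1 + nrm (ℓ - k)) ^ 2)⁻¹ * ((1 + nrm k) ^ 2)⁻¹ :=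
        (hrep ℓ hℓ).norm_le_of_bounded ((summable_inv_sq_conv ℓ).hasSum.mul_left _) hterm
    _ ≤ C * (C + C * C) * (2496 * ((1 + nrm ℓ) ^ 2)⁻¹ * Real.log (2 + nrm ℓ)) := by
        gcongr; exact tsum_inv_sq_conv_le ℓ
    _ = C * (C + C * C) * 2496 * ((1 + nrm ℓ) ^ 2)⁻¹ * Real.log (2 + nrm ℓ) := by ring
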